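/- Let e be a Boolean Dice expression with free variables x1,...,xn and suppose e compiles as e ⤳ (φ, γ, w). Then for any Boolean values v1,...,vn and any Boolean value v, the unnormalized semantics satisfies ⟦e[xi ↦ vi]⟧(v) = WMC(((φ ⇔ v) ∧ γ)[xi ↦ vi], w). -/

import Mathlib

/-! The Boolean fragment of the Dice language, its unnormalized denotational
semantics, its compilation to weighted Boolean formulas, and the correctness
statement relating the two via weighted model counting. -/

/-- Atomic expressions: Boolean constants and variables. -/
inductive AExp : Type
  | const : Bool → AExp
  | var : String → AExp

/-- Boolean Dice expressions:
`e ::= true | false | x | flip θ | observe a | if a then e1 else e2 | let x = e1 in e2`. -/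
inductive BExp : Type
  | atom : AExp → BExp
  | flip : ℝ → BExp
  | obs : AExp → BExp
  | ite : AExp → BExp → BExp → BExp
  | letin : String → BExp → BExp → BExp

/-- Substitution of Boolean values for free variables in an atomic expression
(`ρ x = some b` means `x` is replaced by the constant `b`). -/
def AExp.substEnv (ρ : String → Option Bool) : AExp → AExp
  | .const b => .const b
  | .var x => match ρ x with
      | some b => .const b
      | none => .var x

/-- Capture-avoiding substitution of Boolean values for free variables:
`e[xi ↦ vi]`, for the substitution described by `ρ`. -/
def BExp.substEnv (ρ : String → Option Bool) : BExp → BExp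
  | .atom a => .atom (a.substEnv ρ)
  | .flip θ => .flip θ
  | .obs a => .obs (a.substEnv ρ)
  | .ite a e1 e2 => .ite (a.substEnv ρ) (e1.substEnv ρ) (e2.substEnv ρ)
  | .letin x e1 e2 =>
      .letin x (e1.substEnv ρ) (e2.substEnv (fun y => if y = x then none else ρ y))

/-- Size of an expression (used for termination of the semantics). -/
def BExp.size : BExp → ℕ
  | .atom _ => 1
  | .flip _ => 1
  | .obs _ => 1
  | .ite _ e1 e2 => e1.size + e2.size + 1
  | .letin _ e1 e2 => e1.size + e2.size + 1

theorem BExp.size_substEnv (ρ : String → Option Bool) (e : BExp) :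
    (e.substEnv ρ).size = e.size := by
  induction e generalizing ρ <;> simp [BExp.substEnv, BExp.size, *]

/-- The unnormalized denotational semantics `⟦e⟧ : Bool → ℝ` of a (closed)
Boolean Dice expression:
* `⟦v1⟧(v) = 1` if `v = v1` and `0` otherwise;
* `⟦flip θ⟧(true) = θ` and `⟦flip θ⟧(false) = 1 − θ`;
* `⟦observe v1⟧(v) = 1` if `v1 = true` and `v = true`, else `0`;
* `⟦if true then e1 else e2⟧ = ⟦e1⟧`, `⟦if false then e1 else e2⟧ = ⟦e2⟧`;
* `⟦let x = e1 in e2⟧(v) = Σ_{v'} ⟦e1⟧(v') · ⟦e2[x ↦ v']⟧(v)`.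
(Expressions that still contain free variables in evaluation position get the
always-zero semantics, for totality.) -/
noncomputable def BExp.sem : BExp → Bool → ℝ
  | .atom (.const b), v => if v = b then 1 else 0
  | .atom (.var _), _ => 0
  | .flip θ, v => if v then θ else 1 - θ
  | .obs (.const true), v => if v then 1 else 0
  | .obs _, _ => 0
  | .ite (.const true) e1 _, v => e1.sem v
  | .ite (.const false) _ e2, v => e2.sem v
  | .ite (.var _) _ _, _ => 0
  | .letin x e1 e2, v =>
      ∑ v' : Bool,
        e1.sem v' * (e2.substEnv (fun y => if y = x then some v' else none)).sem v
termination_by e _ => e.size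
decreasing_by all_goals · simp [BExp.size, BExp.size_substEnv] <;> omega

/-- Propositional formulas over flip variables (numbered by `ℕ`) and program
variables (named by `String`). -/
inductive Form : Type
  | tt : Form
  | ff : Form
  | fvar : ℕ → Form
  | pvar : String → Form
  | not : Form → Form
  | and : Form → Form → Form
  | or : Form → Form → Form
  | iff : Form → Form → Form

/-- Evaluation of a formula under truth assignments for flip and program
variables. -/
def Form.eval (σ : ℕ → Bool) (ρ : String → Bool) : Form → Bool
  | .tt => true
  | .ff => false
  | .fvar i => σ i
  | .pvar x => ρ x
  | .not φ => !(φ.eval σ ρ)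
  | .and φ ψ => φ.eval σ ρ && ψ.eval σ ρ
  | .or φ ψ => φ.eval σ ρ || ψ.eval σ ρ
  | .iff φ ψ => φ.eval σ ρ == ψ.eval σ ρ

/-- Logical substitution `φ[x ↦ ψ]` of a formula for a program variable. -/
def Form.psubst : Form → String → Form → Form
  | .tt, _, _ => .tt
  | .ff, _, _ => .ff
  | .fvar i, _, _ => .fvar i
  | .pvar y, x, ψ => if y = x then ψ else .pvar y
  | .not φ, x, ψ => .not (φ.psubst x ψ)
  | .and φ1 φ2, x, ψ => .and (φ1.psubst x ψ) (φ2.psubst x ψ)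
  | .or φ1 φ2, x, ψ => .or (φ1.psubst x ψ) (φ2.psubst x ψ)
  | .iff φ1 φ2, x, ψ => .iff (φ1.psubst x ψ) (φ2.psubst x ψ)

/-- Substitution `[xi ↦ vi]` of Boolean values for the program variables of a
formula (every program variable is replaced by the constant it is mapped to). -/
def Form.substProg (ρ : String → Bool) : Form → Form
  | .tt => .tt
  | .ff => .ff
  | .fvar i => .fvar i
  | .pvar x => if ρ x then .tt else .ff
  | .not φ => .not (φ.substProg ρ)
  | .and φ ψ => .and (φ.substProg ρ) (ψ.substProg ρ)
  | .or φ ψ => .or (φ.substProg ρ) (ψ.substProg ρ)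
  | .iff φ ψ => .iff (φ.substProg ρ) (ψ.substProg ρ)

/-- A Boolean value as a constant formula. -/
def Form.ofBool : Bool → Form
  | true => .tt
  | false => .ff

/-- Compilation of an atomic expression to its unnormalized formula. -/
def AExp.comp : AExp → Form
  | .const true => .tt
  | .const false => .ff
  | .var x => .pvar x

/-- The compilation relation `e ⤳ (φ, γ, w)` of Boolean Dice expressions to
weighted Boolean formulas, producing the unnormalized formula `φ`, the
accepting formula `γ`, and the weight function `w`.  Freshness of flip
variables is modeled by threading a counter: `Comp e n m φ γ w` means `e`
compiles using the fresh flip variables `n, n+1, …, m−1`; the weight function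
`w` is a single global function constrained at each flip variable (the union of
weight functions with disjoint domains). -/
inductive Comp : BExp → ℕ → ℕ → Form → Form → (ℕ → Bool → ℝ) → Prop
  | atom (a : AExp) (n : ℕ) (w : ℕ → Bool → ℝ) :
      Comp (.atom a) n n a.comp .tt w
  | flip (θ : ℝ) (n : ℕ) (w : ℕ → Bool → ℝ)
      (h0 : 0 ≤ θ) (h1 : θ ≤ 1)
      (hwt : w n true = θ) (hwf : w n false = 1 - θ) :
      Comp (.flip θ) n (n + 1) (.fvar n) .tt w
  | obs (a : AExp) (n : ℕ) (w : ℕ → Bool → ℝ) :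
      Comp (.obs a) n n .tt a.comp w
  | ite (a : AExp) (eT eE : BExp) (φT γT φE γE : Form) (n m k : ℕ)
      (w : ℕ → Bool → ℝ)
      (hT : Comp eT n m φT γT w) (hE : Comp eE m k φE γE w) :
      Comp (.ite a eT eE) n k
        (.or (.and a.comp φT) (.and (.not a.comp) φE))
        (.or (.and a.comp γT) (.and (.not a.comp) γE)) w
  | letin (x : String) (e1 e2 : BExp) (φ1 γ1 φ2 γ2 : Form) (n m k : ℕ)
      (w : ℕ → Bool → ℝ)
      (h1 : Comp e1 n m φ1 γ1 w) (h2 : Comp e2 m k φ2 γ2 w) :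
      Comp (.letin x e1 e2) n k
        (φ2.psubst x φ1)
        (.and γ1 (γ2.psubst x φ1)) w

/-- The weighted model count of a formula over the flip variables `0, …, n−1`:
`WMC(φ, w) = Σ_{ω ⊨ φ} Π_{l ∈ ω} w(l)`, the sum over all total truth
assignments of those variables satisfying `φ` of the product of the literal
weights.  (Program variables, which do not occur after substitution, are
evaluated as `false`.) -/
noncomputable def WMC (n : ℕ) (φ : Form) (w : ℕ → Bool → ℝ) : ℝ :=
  ∑ σ : Fin n → Bool,
    if φ.eval (fun i => if h : i < n then σ ⟨i, h⟩ else false) (fun _ => false)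
    then ∏ i : Fin n, w i (σ i) else 0

/-! The invariant proved by induction on the compilation is local: a subexpression compiled
with the flip variables `n, …, m-1` has semantics equal to the weighted sum, over those variables
only, of the indicator of `(φ ⇔ v) ∧ γ`, whatever the values of all other variables. Sums over
consecutive blocks of variables compose, and since the two weights of every flip add up to 1,
summing out variables a function does not read leaves it unchanged. This disposes of the branch
not taken by an `if`. For `let x = e₁ in e₂`, the formulas of `e₁` read only the variables of
`e₁`, so they factor out of the sum over the variables of `e₂`; splitting the indicator of the
compiled formula according to the value `v'` of `φ₁` then yields
`Σ_{v'} ⟦e₁⟧(v') · ⟦e₂[x ↦ v']⟧(v)`. -/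

open Function

def AExp.bval (ρ : String → Bool) : AExp → Bool
  | .const b => b
  | .var x => ρ x

theorem AExp.substEnv_some (ρ : String → Bool) (a : AExp) :
    a.substEnv (fun x => some (ρ x)) = .const (a.bval ρ) := by
  cases a <;> rfl

theorem AExp.substEnv_substEnv (ρ₁ ρ₂ : String → Option Bool) (a : AExp) :
    (a.substEnv ρ₁).substEnv ρ₂ = a.substEnv fun y => (ρ₁ y).or (ρ₂ y) := by
  cases a with
  | const b => rfl
  | var x => cases h : ρ₁ x <;> simp [AExp.substEnv, h]

theorem BExp.substEnv_substEnv (ρ₁ ρ₂ : String → Option Bool) (e : BExp) :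
    (e.substEnv ρ₁).substEnv ρ₂ = e.substEnv fun y => (ρ₁ y).or (ρ₂ y) := by
  induction e generalizing ρ₁ ρ₂ with
  | letin x e₁ e₂ ih₁ ih₂ =>
    simp only [BExp.substEnv, ih₁, ih₂]
    congr 2
    funext y
    split_ifs <;> simp
  | _ => simp [BExp.substEnv, AExp.substEnv_substEnv, *]

theorem BExp.substEnv_update (ρ : String → Bool) (x : String) (b : Bool) (e : BExp) :
    (e.substEnv fun y => if y = x then none else some (ρ y)).substEnv
        (fun y => if y = x then some b else none)
      = e.substEnv fun y => some (update ρ x b y) := by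
  rw [BExp.substEnv_substEnv]
  congr 1
  funext y
  by_cases hy : y = x <;> simp [hy]

theorem AExp.eval_comp (σ : ℕ → Bool) (ρ : String → Bool) (a : AExp) :
    a.comp.eval σ ρ = a.bval ρ := by
  cases a with
  | const b => cases b <;> rfl
  | var x => rfl

@[simp]
theorem Form.eval_ofBool (σ : ℕ → Bool) (ρ : String → Bool) (v : Bool) :
    (Form.ofBool v).eval σ ρ = v := by
  cases v <;> rfl

theorem Form.eval_substProg (ρ : String → Bool) (σ : ℕ → Bool) (ρ' : String → Bool)
    (φ : Form) :
    (φ.substProg ρ).eval σ ρ' = φ.eval σ ρ := by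
  induction φ with
  | pvar x => cases h : ρ x <;> simp [Form.substProg, Form.eval, h]
  | _ => simp [Form.substProg, Form.eval, *]

theorem Form.eval_psubst (σ : ℕ → Bool) (ρ : String → Bool) (x : String) (ψ φ : Form) :
    (φ.psubst x ψ).eval σ ρ = φ.eval σ (update ρ x (ψ.eval σ ρ)) := by
  induction φ with
  | pvar y => by_cases hy : y = x <;> simp [Form.psubst, Form.eval, hy]
  | _ => simp [Form.psubst, Form.eval, *]

noncomputable def Form.indicator (ρ : String → Bool) (φ : Form) : (ℕ → Bool) → ℝ :=
  fun σ => if φ.eval σ ρ then 1 else 0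

theorem Form.indicator_letin (ρ : String → Bool) (x : String) (φ₁ γ₁ φ₂ γ₂ : Form) (v : Bool) :
    (((φ₂.psubst x φ₁).iff (.ofBool v)).and (γ₁.and (γ₂.psubst x φ₁))).indicator ρ
      = ∑ v' : Bool, ((φ₁.iff (.ofBool v')).and γ₁).indicator ρ
          * ((φ₂.iff (.ofBool v)).and γ₂).indicator (update ρ x v') := by
  funext σ
  simp only [Form.indicator, Form.eval, Form.eval_psubst, Form.eval_ofBool, Finset.sum_apply,
    Pi.mul_apply, Fintype.sum_bool]
  cases φ₁.eval σ ρ <;> cases γ₁.eval σ ρ <;> simp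

theorem Form.indicator_ite (ρ : String → Bool) (a : AExp) (φT γT φE γE : Form) (v : Bool) :
    (((Form.or (a.comp.and φT) (a.comp.not.and φE)).iff (.ofBool v)).and
        (Form.or (a.comp.and γT) (a.comp.not.and γE))).indicator ρ
      = if a.bval ρ then ((φT.iff (.ofBool v)).and γT).indicator ρ
        else ((φE.iff (.ofBool v)).and γE).indicator ρ := by
  funext σ
  cases ha : a.bval ρ <;> simp [Form.indicator, Form.eval, AExp.eval_comp, ha]

section SumOut

variable (w : ℕ → Bool → ℝ)

noncomputable def sumOutVar (i : ℕ) : ((ℕ → Bool) → ℝ) →ₗ[ℝ] ((ℕ → Bool) → ℝ) where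
  toFun F σ := ∑ b, w i b * F (update σ i b)
  map_add' F G := by
    ext σ
    simp [mul_add, Finset.sum_add_distrib]
  map_smul' c F := by
    ext σ
    simp only [Pi.smul_apply, smul_eq_mul, RingHom.id_apply, Finset.mul_sum]
    exact Finset.sum_congr rfl fun b _ => by ring

noncomputable def sumOut (l : List ℕ) : ((ℕ → Bool) → ℝ) →ₗ[ℝ] ((ℕ → Bool) → ℝ) :=
  l.foldr (fun i T => sumOutVar w i ∘ₗ T) LinearMap.id

variable {w}

theorem sumOutVar_apply (i : ℕ) (F : (ℕ → Bool) → ℝ) (σ : ℕ → Bool) :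
    sumOutVar w i F σ = ∑ b, w i b * F (update σ i b) := rfl

@[simp]
theorem sumOut_nil (F : (ℕ → Bool) → ℝ) : sumOut w [] F = F := rfl

theorem sumOut_cons (i : ℕ) (l : List ℕ) (F : (ℕ → Bool) → ℝ) :
    sumOut w (i :: l) F = sumOutVar w i (sumOut w l F) := rfl

theorem sumOut_append (l₁ l₂ : List ℕ) (F : (ℕ → Bool) → ℝ) :
    sumOut w (l₁ ++ l₂) F = sumOut w l₁ (sumOut w l₂ F) := by
  simp only [sumOut, List.foldr_append]
  induction l₁ with
  | nil => rfl
  | cons i l ih => simp [ih]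

theorem sumOut_range'_split {n m k : ℕ} (hnm : n ≤ m) (hmk : m ≤ k) (F : (ℕ → Bool) → ℝ) :
    sumOut w (List.range' n (k - n)) F
      = sumOut w (List.range' n (m - n)) (sumOut w (List.range' m (k - m)) F) := by
  have h := @List.range'_append n (m - n) (k - m) 1
  rw [Nat.one_mul, Nat.add_sub_cancel' hnm, show m - n + (k - m) = k - n by omega] at h
  rw [← h, sumOut_append]

theorem sumOut_mul_left {l : List ℕ} {f : (ℕ → Bool) → ℝ} (hf : DependsOn f {i | i ∉ l})
    (G : (ℕ → Bool) → ℝ) : sumOut w l (f * G) = f * sumOut w l G := by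
  induction l with
  | nil => rfl
  | cons i l ih =>
    have hf' : DependsOn f {j | j ∉ l} :=
      hf.mono fun j (hj : j ∉ i :: l) hjl => hj (List.mem_cons_of_mem i hjl)
    ext σ
    have hfi : ∀ b, f (update σ i b) = f σ := fun b =>
      hf fun j hj => update_of_ne (by rintro rfl; exact hj List.mem_cons_self) b σ
    simp only [sumOut_cons, ih hf', sumOutVar_apply, Pi.mul_apply, hfi, Finset.mul_sum]
    exact Finset.sum_congr rfl fun b _ => by ring

theorem sumOut_one {l : List ℕ} (hw : ∀ i ∈ l, w i true + w i false = 1) :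
    sumOut w l 1 = 1 := by
  induction l with
  | nil => rfl
  | cons i l ih =>
    ext σ
    rw [sumOut_cons, ih fun j hj => hw j (List.mem_cons_of_mem i hj), sumOutVar_apply]
    simp [hw i List.mem_cons_self]

theorem sumOut_eq_self {l : List ℕ} (hw : ∀ i ∈ l, w i true + w i false = 1)
    {f : (ℕ → Bool) → ℝ} (hf : DependsOn f {i | i ∉ l}) : sumOut w l f = f := by
  calc sumOut w l f = sumOut w l (f * 1) := by rw [mul_one]
    _ = f * sumOut w l 1 := sumOut_mul_left hf 1
    _ = f := by rw [sumOut_one hw, mul_one]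

end SumOut

theorem update_extend_snoc (n : ℕ) (τ : Fin n → Bool) (b : Bool) (σ : ℕ → Bool) :
    update (fun j => if h : j < n then τ ⟨j, h⟩ else σ j) n b
      = fun j => if h : j < n + 1 then (Fin.snoc τ b : Fin (n + 1) → Bool) ⟨j, h⟩ else σ j := by
  funext j
  rcases lt_trichotomy j n with hj | rfl | hj
  · simp [hj, hj.ne, hj.trans (Nat.lt_succ_self n), Fin.snoc, update_of_ne]
  · simp [Fin.snoc]
  · simp [update_of_ne hj.ne', hj.not_gt, (Nat.succ_le_of_lt hj).not_gt]

theorem sumOut_range_apply (w : ℕ → Bool → ℝ) (n : ℕ) (F : (ℕ → Bool) → ℝ) (σ : ℕ → Bool) :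
    sumOut w (List.range n) F σ
      = ∑ τ : Fin n → Bool,
          (∏ i : Fin n, w i (τ i)) * F fun j => if h : j < n then τ ⟨j, h⟩ else σ j := by
  induction n generalizing F with
  | zero => simp
  | succ n ih =>
    rw [List.range_succ, sumOut_append, ih, ← (Fin.snocEquiv fun _ => Bool).sum_comp,
      Fintype.sum_prod_type, Finset.sum_comm]
    refine Finset.sum_congr rfl fun τ _ => ?_
    simp only [sumOut_cons, sumOut_nil, sumOutVar_apply, Finset.mul_sum, update_extend_snoc]
    refine Finset.sum_congr rfl fun b _ => ?_
    simp only [Order.lt_add_one_iff, Fin.snocEquiv, Equiv.coe_fn_mk, Fin.prod_univ_castSucc,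
      Fin.val_castSucc, Fin.snoc_castSucc, Fin.val_last, Fin.snoc_last]
    ring

theorem WMC_substProg (n : ℕ) (φ : Form) (w : ℕ → Bool → ℝ) (ρ : String → Bool) :
    WMC n (φ.substProg ρ) w = sumOut w (List.range n) (φ.indicator ρ) fun _ => false := by
  simp only [WMC, sumOut_range_apply, Form.eval_substProg, Form.indicator, mul_ite, mul_one,
    mul_zero]

namespace Comp

variable {e : BExp} {n m : ℕ} {φ γ : Form} {w : ℕ → Bool → ℝ}

theorem le (h : Comp e n m φ γ w) : n ≤ m := by
  induction h <;> omega

theorem weight_sum (h : Comp e n m φ γ w) :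
    ∀ i ∈ List.range' n (m - n), w i true + w i false = 1 := by
  induction h with
  | flip θ n w _ _ hwt hwf => simp [hwt, hwf]
  | ite _ _ _ _ _ _ _ n m k w hT hE ihT ihE | letin _ _ _ _ _ _ _ n m k w hT hE ihT ihE =>
    intro i hi
    have := hT.le
    have := hE.le
    rw [List.mem_range'_1] at hi
    rcases lt_or_ge i m with him | him
    · exact ihT i (List.mem_range'_1.2 ⟨hi.1, by omega⟩)
    · exact ihE i (List.mem_range'_1.2 ⟨him, by omega⟩)
  | _ => simp

theorem dependsOn (h : Comp e n m φ γ w) (ρ : String → Bool) :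
    DependsOn (φ.eval · ρ) (Set.Ico n m) ∧ DependsOn (γ.eval · ρ) (Set.Ico n m) := by
  induction h generalizing ρ with
  | atom | obs => exact ⟨fun σ σ' _ => by simp [Form.eval, AExp.eval_comp],
      fun σ σ' _ => by simp [Form.eval, AExp.eval_comp]⟩
  | flip => exact ⟨fun σ σ' hag => hag _ (by simp), fun _ _ _ => rfl⟩
  | ite _ _ _ _ _ _ _ n m k w hT hE ihT ihE | letin _ _ _ _ _ _ _ n m k w hT hE ihT ihE =>
    refine ⟨fun σ σ' hag => ?_, fun σ σ' hag => ?_⟩ <;>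
    · have hagT : ∀ i ∈ Set.Ico n m, σ i = σ' i := fun i hi => hag i ⟨hi.1, hi.2.trans_le hE.le⟩
      have hagE : ∀ i ∈ Set.Ico m k, σ i = σ' i := fun i hi => hag i ⟨hT.le.trans hi.1, hi.2⟩
      simp only [Form.eval, Form.eval_psubst, AExp.eval_comp, (ihT ρ).1 hagT, (ihT ρ).2 hagT,
        (ihE _).1 hagE, (ihE _).2 hagE]

theorem dependsOn_indicator (h : Comp e n m φ γ w) (ρ : String → Bool) (v : Bool) :
    DependsOn (((φ.iff (.ofBool v)).and γ).indicator ρ) (Set.Ico n m) := fun σ σ' hag => by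
  simp only [Form.indicator, Form.eval, Form.eval_ofBool, (h.dependsOn ρ).1 hag,
    (h.dependsOn ρ).2 hag]

theorem dependsOn_indicator_not_mem_range' (h : Comp e n m φ γ w) (ρ : String → Bool) (v : Bool)
    (d : ℕ) : DependsOn (((φ.iff (.ofBool v)).and γ).indicator ρ) {i | i ∉ List.range' m d} :=
  (h.dependsOn_indicator ρ v).mono fun _ hi hmem => (List.mem_range'_1.1 hmem).1.not_gt hi.2

theorem sem_eq_sumOut (h : Comp e n m φ γ w) (ρ : String → Bool) (v : Bool) (σ : ℕ → Bool) :
    (e.substEnv fun x => some (ρ x)).sem v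
      = sumOut w (List.range' n (m - n)) (((φ.iff (.ofBool v)).and γ).indicator ρ) σ := by
  induction h generalizing ρ v σ with
  | atom a | obs a =>
    simp only [BExp.substEnv, AExp.substEnv_some, Nat.sub_self, List.range'_zero, sumOut_nil,
      Form.indicator, Form.eval, AExp.eval_comp, Form.eval_ofBool]
    cases a.bval ρ <;> cases v <;> simp [BExp.sem]
  | flip θ n w _ _ hwt hwf =>
    simp only [BExp.substEnv, Nat.add_sub_cancel_left, List.range'_one, sumOut_cons, sumOut_nil,
      sumOutVar_apply, Form.indicator, Form.eval]
    cases v <;> simp [BExp.sem, hwt, hwf]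
  | ite a eT eE φT γT φE γE n m k w hT hE ihT ihE =>
    rw [Form.indicator_ite, sumOut_range'_split hT.le hE.le]
    simp only [BExp.substEnv, AExp.substEnv_some]
    cases a.bval ρ
    · have hE_const :
          sumOut w (List.range' m (k - m)) (((φE.iff (.ofBool v)).and γE).indicator ρ)
            = fun _ => (eE.substEnv fun x => some (ρ x)).sem v :=
        funext fun τ => (ihE ρ v τ).symm
      simp only [BExp.sem, Bool.false_eq_true, ↓reduceIte, hE_const,
        sumOut_eq_self hT.weight_sum ((dependsOn_const _).mono (Set.empty_subset _))]
    · simp only [BExp.sem, ↓reduceIte, ihT ρ v σ,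
        sumOut_eq_self hE.weight_sum (hT.dependsOn_indicator_not_mem_range' ρ v _)]
  | letin x e₁ e₂ φ₁ γ₁ φ₂ γ₂ n m k w h₁ h₂ ih₁ ih₂ =>
    simp only [BExp.substEnv, BExp.sem, BExp.substEnv_update]
    rw [Form.indicator_letin, sumOut_range'_split h₁.le h₂.le, map_sum]
    simp only [sumOut_mul_left (h₁.dependsOn_indicator_not_mem_range' ρ _ _), map_sum,
      Finset.sum_apply]
    refine Finset.sum_congr rfl fun v' _ => ?_
    have h₂_const : sumOut w (List.range' m (k - m))
        (((φ₂.iff (.ofBool v)).and γ₂).indicator (update ρ x v'))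
        = fun _ => (e₂.substEnv fun y => some (update ρ x v' y)).sem v :=
      funext fun τ => (ih₂ _ v τ).symm
    have mul_const_eq_smul : ∀ (F : (ℕ → Bool) → ℝ) (c : ℝ), F * (fun _ => c) = c • F :=
      fun F c => funext fun _ => mul_comm _ _
    rw [h₂_const, ih₁ ρ v' σ, mul_const_eq_smul, map_smul, Pi.smul_apply, smul_eq_mul, mul_comm]

end Comp

/-- **Boolean expression correctness (key lemma).**  If a Boolean Dice
expression `e` with free variables among `x1, …, xn` compiles as
`e ⤳ (φ, γ, w)`, then for any Boolean values `v1, …, vn` (given by the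
environment `ρ`) and any Boolean value `v`, the unnormalized semantics
satisfies `⟦e[xi ↦ vi]⟧(v) = WMC(((φ ⇔ v) ∧ γ)[xi ↦ vi], w)`. -/
theorem boolean_expression_unnormalized_correctness
    (e : BExp) (n : ℕ) (φ γ : Form) (w : ℕ → Bool → ℝ)
    (h : Comp e 0 n φ γ w) (ρ : String → Bool) (v : Bool) :
    (e.substEnv (fun x => some (ρ x))).sem v
      = WMC n (((φ.iff (Form.ofBool v)).and γ).substProg ρ) w := by
  rw [WMC_substProg, List.range_eq_range', h.sem_eq_sumOut ρ v, Nat.sub_zero]
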